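/- Let A, B ∈ M_n(ℤ) and let d be a nonzero integer such that B·A = d·I_n. Let R ∈ (K^×)^n. Then for all but finitely many primes 𝔭 of K, the order of (R^d mod 𝔭) divides the order of ((A·R) mod 𝔭), where R^d = (R_1^d,…,R_n^d) and (A·R)_j = ∏_{i=1}^n R_i^{A_{j i}}. -/

import Mathlib

open NumberField

/-- `x ≡ 1 (mod 𝔭)` for `x ∈ K`: there is a representation `x = a/b` with `a, b`
integral, `b ∉ 𝔭` and `a ≡ b (mod 𝔭)`. -/
def RedOne (K : Type*) [Field K] [NumberField K] (𝔭 : Ideal (𝓞 K)) (x : K) : Prop :=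
  ∃ a b : 𝓞 K, b ∉ 𝔭 ∧ (algebraMap (𝓞 K) K b) * x = algebraMap (𝓞 K) K a ∧ a - b ∈ 𝔭

/-- The order of the reduction of `P ∈ (K^×)^n` modulo `𝔭`: the least `k > 0` such that
every coordinate of `P^k` reduces to `1` modulo `𝔭` (junk value `0` at the finitely many
bad primes, where no such `k` exists). -/
noncomputable def redOrder (K : Type*) [Field K] [NumberField K] {n : ℕ}
    (𝔭 : Ideal (𝓞 K)) (P : Fin n → Kˣ) : ℕ :=
  sInf {k | 0 < k ∧ ∀ i, RedOne K 𝔭 ((P i : K) ^ k)}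

/-!
Modulo `𝔭`, the elements `x` with `RedOne K 𝔭 x` form a subgroup `U` of `Kˣ`, and `redOrder` is
the order of the image of `P` in the commutative group `(Kˣ ⧸ U)ⁿ` (with junk value `0` exactly
when that order is infinite). On any commutative group `G` an integer matrix `A` acts on `Gⁿ`
by `(A·x)ⱼ = ∏ᵢ xᵢ ^ Aⱼᵢ`, functorially in `G`, with `B·(A·x) = (B * A)·x`. So if `B * A = d • 1`
then `x ^ d` is the image of `A·x` under a homomorphism, and its order divides that of `A·x`;
this holds at every prime.
-/

theorem Finset.prod_zpow_eq_zpow_sum {ι G : Type*} [CommGroup G] (s : Finset ι) (f : ι → ℤ)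
    (a : G) : ∏ i ∈ s, a ^ f i = a ^ ∑ i ∈ s, f i :=
  Finset.cons_induction (by simp)
    (fun _ _ _ h => by rw [Finset.prod_cons, Finset.sum_cons, zpow_add, h]) s

namespace Matrix

variable {G H : Type*} [CommGroup G] [CommGroup H] {l m n : Type*} [Fintype n]

def zpowVec (A : Matrix m n ℤ) : (n → G) →* (m → G) where
  toFun x j := ∏ i, x i ^ A j i
  map_one' := by ext; simp
  map_mul' x y := by ext; simp [mul_zpow, Finset.prod_mul_distrib]

theorem zpowVec_apply (A : Matrix m n ℤ) (x : n → G) (j : m) :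
    zpowVec A x j = ∏ i, x i ^ A j i := rfl

theorem zpowVec_mul [Fintype m] (B : Matrix l m ℤ) (A : Matrix m n ℤ) (x : n → G) :
    zpowVec (B * A) x = zpowVec B (zpowVec A x) := by
  ext k
  simp only [zpowVec_apply, mul_apply, ← Finset.prod_zpow, ← _root_.zpow_mul]
  rw [Finset.prod_comm]
  simp only [Finset.prod_zpow_eq_zpow_sum, mul_comm]

theorem zpowVec_smul_one [DecidableEq n] (d : ℤ) (x : n → G) :
    zpowVec (d • (1 : Matrix n n ℤ)) x = x ^ d := by
  ext j
  rw [zpowVec_apply, Finset.prod_eq_single j]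
  · simp
  · intro i _ hij
    simp [one_apply_ne' hij]
  · simp

theorem map_zpowVec (f : G →* H) (A : Matrix m n ℤ) (x : n → G) :
    f ∘ zpowVec A x = zpowVec A (f ∘ x) := by
  ext j
  simp [zpowVec_apply]

theorem orderOf_zpow_dvd_orderOf_zpowVec [DecidableEq n] [Fintype m] {A : Matrix m n ℤ}
    {B : Matrix n m ℤ} {d : ℤ} (hBA : B * A = d • 1) (x : n → G) :
    orderOf (x ^ d) ∣ orderOf (zpowVec A x) := by
  rw [← zpowVec_smul_one, ← hBA, zpowVec_mul]
  exact orderOf_map_dvd (zpowVec (G := G) B) _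

end Matrix

section RedOne

variable {K : Type*} [Field K] [NumberField K] {𝔭 : Ideal (𝓞 K)}

theorem redOne_one (h : 𝔭 ≠ ⊤) : RedOne K 𝔭 (1 : K) :=
  ⟨1, 1, by simpa using (Ideal.ne_top_iff_one 𝔭).mp h, by simp, by simp⟩

theorem redOne_mul [h𝔭 : 𝔭.IsPrime] {x y : K} (hx : RedOne K 𝔭 x) (hy : RedOne K 𝔭 y) :
    RedOne K 𝔭 (x * y) := by
  obtain ⟨a₁, b₁, hb₁, he₁, hm₁⟩ := hx
  obtain ⟨a₂, b₂, hb₂, he₂, hm₂⟩ := hy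
  refine ⟨a₁ * a₂, b₁ * b₂, h𝔭.mul_notMem hb₁ hb₂, ?_, ?_⟩
  · rw [map_mul, map_mul, mul_mul_mul_comm, he₁, he₂]
  · have : a₁ * a₂ - b₁ * b₂ = a₁ * (a₂ - b₂) + b₂ * (a₁ - b₁) := by ring
    rw [this]
    exact 𝔭.add_mem (𝔭.mul_mem_left _ hm₂) (𝔭.mul_mem_left _ hm₁)

theorem redOne_inv {x : K} (hx : x ≠ 0) (h : RedOne K 𝔭 x) : RedOne K 𝔭 x⁻¹ := by
  obtain ⟨a, b, hb, he, hm⟩ := h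
  have ha : a ∉ 𝔭 := fun ha => hb (by simpa using 𝔭.sub_mem ha hm)
  refine ⟨b, a, ha, ?_, by simpa using 𝔭.neg_mem hm⟩
  rw [← he, mul_assoc, mul_inv_cancel₀ hx, mul_one]

variable (K 𝔭) in
def redOneSubgroup [h𝔭 : 𝔭.IsPrime] : Subgroup Kˣ where
  carrier := {x | RedOne K 𝔭 x}
  one_mem' := redOne_one h𝔭.ne_top
  mul_mem' := redOne_mul
  inv_mem' {x} hx := by
    simpa only [Set.mem_ofPred_eq, Units.val_inv_eq_inv_val] using redOne_inv x.ne_zero hx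

theorem redOrder_eq_orderOf [𝔭.IsPrime] {n : ℕ} (P : Fin n → Kˣ) :
    redOrder K 𝔭 P = orderOf (QuotientGroup.mk' (redOneSubgroup K 𝔭) ∘ P) := by
  rw [Pi.orderOf_eq_sInf, redOrder]
  congr 1
  ext k
  refine and_congr_right fun _ => forall_congr' fun i => ?_
  rw [orderOf_dvd_iff_pow_eq_one, Function.comp_apply, ← map_pow, QuotientGroup.mk'_apply,
    QuotientGroup.eq_one_iff, ← Units.val_pow_eq_pow_val]
  rfl

end RedOne

theorem isogeny_order_divides_split_torus_general
    {K : Type*} [Field K] [NumberField K] {n : ℕ}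
    (A B : Matrix (Fin n) (Fin n) ℤ) (d : ℤ)
    (hBA : B * A = d • (1 : Matrix (Fin n) (Fin n) ℤ))
    (R : Fin n → Kˣ) :
    ∃ T : Finset (Ideal (𝓞 K)), ∀ 𝔭 : Ideal (𝓞 K), 𝔭.IsMaximal → 𝔭 ∉ T →
      redOrder K 𝔭 (fun i => R i ^ d) ∣ redOrder K 𝔭 (fun j => ∏ i, R i ^ A j i) := by
  refine ⟨∅, fun 𝔭 h𝔭 _ => ?_⟩
  have : 𝔭.IsPrime := h𝔭.isPrime
  let π : Kˣ →* Kˣ ⧸ redOneSubgroup K 𝔭 := QuotientGroup.mk' _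
  have hpow : π ∘ (fun i => R i ^ d) = (π ∘ R) ^ d := by
    ext i
    simp
  have hmat : π ∘ (fun j => ∏ i, R i ^ A j i) = A.zpowVec (π ∘ R) :=
    Matrix.map_zpowVec (H := Kˣ ⧸ redOneSubgroup K 𝔭) π A R
  rw [redOrder_eq_orderOf, redOrder_eq_orderOf, hpow, hmat]
  exact Matrix.orderOf_zpow_dvd_orderOf_zpowVec hBA (π ∘ R)

/-- Lemma 4 in the split-torus case: if `B * A = d • 1` then for all but finitely many
primes `𝔭` the order of `(R^d mod 𝔭)` divides the order of `(A·R mod 𝔭)`. -/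
theorem isogeny_order_divides_split_torus
    {K : Type*} [Field K] [NumberField K] {n : ℕ}
    (A B : Matrix (Fin n) (Fin n) ℤ) (d : ℤ) (hd : d ≠ 0)
    (hBA : B * A = d • (1 : Matrix (Fin n) (Fin n) ℤ))
    (R : Fin n → Kˣ) :
    ∃ T : Finset (Ideal (𝓞 K)), ∀ 𝔭 : Ideal (𝓞 K), 𝔭.IsMaximal → 𝔭 ∉ T →
      redOrder K 𝔭 (fun i => R i ^ d) ∣ redOrder K 𝔭 (fun j => ∏ i, R i ^ A j i) :=
  isogeny_order_divides_split_torus_general A B d hBA R
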